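/- There are no integers a, b such that, setting Z = aH + bC in the lattice with Gram matrix [[70,2],[2,−2]], one has (H − 4C)·Z < 0 ≤ (H − C)·Z and −18 ≤ Z² < 0. Equivalently: there are no integers a, B with (36/5)a < B ≤ 18a and −18 ≤ 36a² − B², where B = a − b. -/

import Mathlib

/-!
Writing `B = a - b`, the self-intersection is `Z² = 70a² + 4ab - 2b² = 2(36a² - B²)`, and the two
linear conditions read `36a/5 < B ≤ 18a`. They force `a ≥ 1` and hence `B ≥ 6a + 1`, so
`B² - 36a² ≥ 12a + 1 ≥ 13 > 9`, i.e. `Z² < -18`.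
-/

theorem Int.sq_add_one_le_sq_of_lt {m n : ℤ} (hm : 0 ≤ m) (h : m < n) : (m + 1) ^ 2 ≤ n ^ 2 :=
  pow_le_pow_left₀ (by omega) (Int.add_one_le_of_lt h) 2

theorem self_intersection_eq (a b : ℤ) :
    70 * a ^ 2 + 4 * a * b - 2 * b ^ 2 = 2 * (36 * a ^ 2 - (a - b) ^ 2) := by
  ring

theorem sq_sub_thirtysix_sq_gt_nine {a B : ℤ} (ha : 0 < a) (hB : 6 * a < B) :
    9 < B ^ 2 - 36 * a ^ 2 := by
  have hsq : (6 * a + 1) ^ 2 ≤ B ^ 2 := Int.sq_add_one_le_sq_of_lt (by omega) hB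
  linarith

/-- There are no integers a, b such that, for Z = aH + bC in the lattice with Gram matrix
[[70,2],[2,-2]], one has (H - 4C)·Z < 0 ≤ (H - C)·Z and -18 ≤ Z² < 0.
Here (H - 4C)·Z = 62a + 10b, (H - C)·Z = 68a + 4b, Z² = 70a² + 4ab - 2b². -/
theorem stmt3 : ¬ ∃ a b : ℤ,
    62 * a + 10 * b < 0 ∧ 0 ≤ 68 * a + 4 * b ∧
    -18 ≤ 70 * a ^ 2 + 4 * a * b - 2 * b ^ 2 ∧
    70 * a ^ 2 + 4 * a * b - 2 * b ^ 2 < 0 := by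
  rintro ⟨a, b, hHminus4C, hHminusC, hlower, -⟩
  have ha : 0 < a := by omega
  have hB : 6 * a < a - b := by omega
  have hgap := sq_sub_thirtysix_sq_gt_nine ha hB
  rw [self_intersection_eq] at hlower
  linarith
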